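/- arXiv:2103.15091 — 3 statements merged into one kernel-verified Lean document; each statement's English description precedes it below -/
import Mathlib

section
/- Let F be a field equipped with a valuation ν : F^× → ℤ, and let γ₁, …, γ_{d+1} be pairwise distinct elements of F. Then there exists a permutation σ of {1, …, d+1} such that for all 1 ≤ i < j ≤ d+1, ν(γ_{σ(i)} − γ_{σ(j)}) = min { ν(γ_{σ(l)} − γ_{σ(l+1)}) : i ≤ l < j }. -/
section MinimalFormAux

variable {F : Type*} [Field F] {ν : F → ℤ}

private lemma mfe_nu_neg (hmul : ∀ x y : F, x ≠ 0 → y ≠ 0 → ν (x * y) = ν x + ν y)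
    {x : F} (hx : x ≠ 0) : ν (-x) = ν x := by
  have h1 : ν (1 : F) = 0 := by
    have := hmul 1 1 one_ne_zero one_ne_zero
    simp at this; omega
  have hm1 : ν (-1 : F) = 0 := by
    have := hmul (-1) (-1) (by norm_num) (by norm_num)
    simp [h1] at this; omega
  have := hmul (-1) x (by norm_num) hx
  simpa [hm1] using this

private lemma mfe_ultra
    (hadd : ∀ x y : F, x ≠ 0 → y ≠ 0 → x + y ≠ 0 → min (ν x) (ν y) ≤ ν (x + y))
    {a b c : F} (hab : a ≠ b) (hbc : b ≠ c) (hac : a ≠ c) :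
    min (ν (a - b)) (ν (b - c)) ≤ ν (a - c) := by
  have h := hadd (a - b) (b - c) (sub_ne_zero.2 hab) (sub_ne_zero.2 hbc)
    (by rw [sub_add_sub_cancel]; exact sub_ne_zero.2 hac)
  rwa [sub_add_sub_cancel] at h

/-- Greedy nearest-neighbour enumeration of a finite subset of `F`, starting at `a`. -/
private lemma mfe_build (ν : F → ℤ) [DecidableEq F] :
    ∀ (n : ℕ) (s : Finset F), s.card = n + 1 → ∀ a ∈ s,
    ∃ L : List F, L.length = n + 1 ∧ L.Nodup ∧ (∀ x ∈ L, x ∈ s) ∧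
      (∀ h0 : 0 < L.length, L[0]'h0 = a) ∧
      (∀ i j : ℕ, ∀ hi : i + 1 < L.length, ∀ hj : j < L.length, i < j →
        ν (L[i]'(by omega) - L[j]'hj) ≤ ν (L[i]'(by omega) - L[i+1]'hi)) := by
  intro n
  induction n with
  | zero =>
    intro s hs a ha
    refine ⟨[a], rfl, by simp, ?_, by simp, ?_⟩
    · intro x hx
      simp at hx; subst hx; exact ha
    · intro i j hi hj hij
      simp at hi
  | succ n ih =>
    intro s hs a ha
    have hcard : (s.erase a).card = n + 1 := by
      rw [Finset.card_erase_of_mem ha, hs]; omega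
    have hne : (s.erase a).Nonempty := by
      rw [← Finset.card_pos, hcard]; omega
    obtain ⟨b, hb, hbmax⟩ := Finset.exists_max_image (s.erase a) (fun x => ν (a - x)) hne
    obtain ⟨L', hlen, hnodup, hsub, hhead, hgreedy⟩ := ih (s.erase a) hcard b hb
    refine ⟨a :: L', by simp [hlen], ?_, ?_, ?_, ?_⟩
    · refine List.nodup_cons.2 ⟨fun h => ?_, hnodup⟩
      exact (Finset.ne_of_mem_erase (hsub a h)) rfl
    · intro x hx
      rcases List.mem_cons.1 hx with h | h
      · exact h ▸ ha
      · exact Finset.mem_of_mem_erase (hsub x h)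
    · intro h0; simp
    · intro i j hi hj hij
      match i, j with
      | 0, (j + 1) =>
        simp only [List.getElem_cons_zero, List.getElem_cons_succ]
        have h0 : 0 < L'.length := by simp at hj; omega
        rw [hhead h0]
        exact hbmax _ (hsub _ (List.getElem_mem _))
      | (i + 1), (j + 1) =>
        simp only [List.getElem_cons_succ]
        exact hgreedy i j (by simpa using hi) (by simpa using hj) (by omega)

section idx
variable {d : ℕ} {z : ℕ → F}

/-- Telescope: some consecutive valuation is ≤ the valuation of the long difference. -/
private lemma mfe_telescope
    (hadd : ∀ x y : F, x ≠ 0 → y ≠ 0 → x + y ≠ 0 → min (ν x) (ν y) ≤ ν (x + y))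
    (hz : ∀ m m' : ℕ, m ≤ d → m' ≤ d → m ≠ m' → z m ≠ z m') :
    ∀ j i : ℕ, i < j → j ≤ d →
    ∃ l : ℕ, i ≤ l ∧ l + 1 ≤ j ∧ ν (z l - z (l + 1)) ≤ ν (z i - z j) := by
  intro j
  induction j with
  | zero => omega
  | succ j ihj =>
    intro i hij hjd
    rcases Nat.lt_or_ge i j with hij' | hij'
    · have h := mfe_ultra hadd (hz i j (by omega) (by omega) (by omega))
        (hz j (j+1) (by omega) (by omega) (by omega))
        (hz i (j+1) (by omega) (by omega) (by omega))
      rcases le_total (ν (z i - z j)) (ν (z j - z (j+1))) with hle | hle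
      · obtain ⟨l, hl1, hl2, hl3⟩ := ihj i hij' (by omega)
        exact ⟨l, hl1, by omega, hl3.trans (by simpa [min_eq_left hle] using h)⟩
      · exact ⟨j, by omega, le_rfl, by simpa [min_eq_right hle] using h⟩
    · have : i = j := by omega
      subst this
      exact ⟨i, le_rfl, le_rfl, le_rfl⟩

/-- Reverse telescope: if all consecutive valuations in `[i, l)` are ≥ v, so is `ν (z i - z l)`. -/
private lemma mfe_telescope'
    (hadd : ∀ x y : F, x ≠ 0 → y ≠ 0 → x + y ≠ 0 → min (ν x) (ν y) ≤ ν (x + y))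
    (hz : ∀ m m' : ℕ, m ≤ d → m' ≤ d → m ≠ m' → z m ≠ z m') :
    ∀ l i : ℕ, ∀ v : ℤ, i < l → l ≤ d →
    (∀ l' : ℕ, i ≤ l' → l' + 1 ≤ l → v ≤ ν (z l' - z (l' + 1))) →
    v ≤ ν (z i - z l) := by
  intro l
  induction l with
  | zero => omega
  | succ l ihl =>
    intro i v hil hld hcons
    rcases Nat.lt_or_ge i l with hil' | hil'
    · have h := mfe_ultra hadd (hz i l (by omega) (by omega) (by omega))
        (hz l (l+1) (by omega) (by omega) (by omega))
        (hz i (l+1) (by omega) (by omega) (by omega))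
      have h1 : v ≤ ν (z i - z l) := ihl i v hil' (by omega)
        (fun l' h1 h2 => hcons l' h1 (by omega))
      have h2 : v ≤ ν (z l - z (l+1)) := hcons l (by omega) le_rfl
      exact le_trans (le_min h1 h2) h
    · have : i = l := by omega
      subst this
      exact hcons i le_rfl le_rfl

/-- Key consequence of the greedy property: any long difference has valuation ≤ every
consecutive valuation in between. -/
private lemma mfe_greedy_all (hmul : ∀ x y : F, x ≠ 0 → y ≠ 0 → ν (x * y) = ν x + ν y)
    (hadd : ∀ x y : F, x ≠ 0 → y ≠ 0 → x + y ≠ 0 → min (ν x) (ν y) ≤ ν (x + y))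
    (hz : ∀ m m' : ℕ, m ≤ d → m' ≤ d → m ≠ m' → z m ≠ z m')
    (hG : ∀ l j : ℕ, l < j → j ≤ d → ν (z l - z j) ≤ ν (z l - z (l + 1))) :
    ∀ l i j : ℕ, i < j → j ≤ d → i ≤ l → l < j → ν (z i - z j) ≤ ν (z l - z (l + 1)) := by
  intro l
  induction l using Nat.strong_induction_on with
  | _ l ih =>
    intro i j hij hjd hil hlj
    rcases Nat.eq_or_lt_of_le hil with heq | hlt
    · subst heq; exact hG i j hij hjd
    · have hIH : ∀ l' : ℕ, i ≤ l' → l' + 1 ≤ l → ν (z i - z j) ≤ ν (z l' - z (l' + 1)) :=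
        fun l' h1 h2 => ih l' (by omega) i j hij hjd h1 (by omega)
      have h1 : ν (z i - z j) ≤ ν (z i - z l) :=
        mfe_telescope' hadd hz l i _ hlt (by omega) hIH
      have h2 : ν (z l - z i) = ν (z i - z l) := by
        rw [← neg_sub (z i) (z l)]
        exact mfe_nu_neg hmul (sub_ne_zero.2 (hz i l (by omega) (by omega) (by omega)))
      have h3 := mfe_ultra hadd (hz l i (by omega) (by omega) (by omega))
        (hz i j (by omega) (by omega) (by omega))
        (hz l j (by omega) (by omega) (by omega))
      have h4 : ν (z i - z j) ≤ ν (z l - z j) :=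
        le_trans (le_min (h2 ▸ h1) le_rfl) h3
      exact h4.trans (hG l j hlj hjd)

end idx

end MinimalFormAux

/-- Every finite family of pairwise distinct elements of a valued field can be
reordered into "minimal form": the valuation of any difference `γ_{σ i} - γ_{σ j}` (i < j)
is the minimum of the valuations of the consecutive differences in between. -/
theorem minimal_form_exists {F : Type*} [Field F] (ν : F → ℤ)
    (hmul : ∀ x y : F, x ≠ 0 → y ≠ 0 → ν (x * y) = ν x + ν y)
    (hadd : ∀ x y : F, x ≠ 0 → y ≠ 0 → x + y ≠ 0 → min (ν x) (ν y) ≤ ν (x + y))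
    (d : ℕ) (γ : Fin (d + 1) → F) (hγ : Function.Injective γ) :
    ∃ σ : Equiv.Perm (Fin (d + 1)), ∀ i j : Fin (d + 1), i < j →
      (∀ l : Fin d, i ≤ l.castSucc → l.succ ≤ j →
        ν (γ (σ i) - γ (σ j)) ≤ ν (γ (σ l.castSucc) - γ (σ l.succ))) ∧
      (∃ l : Fin d, i ≤ l.castSucc ∧ l.succ ≤ j ∧
        ν (γ (σ i) - γ (σ j)) = ν (γ (σ l.castSucc) - γ (σ l.succ))) := by
  classical
  set s : Finset F := Finset.univ.image γ with hs_def
  have hscard : s.card = d + 1 := by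
    rw [hs_def, Finset.card_image_of_injective _ hγ, Finset.card_univ, Fintype.card_fin]
  have ha : γ 0 ∈ s := Finset.mem_image_of_mem _ (Finset.mem_univ _)
  obtain ⟨L, hLlen, hLnodup, hLsub, -, hLgreedy⟩ := mfe_build ν d s hscard (γ 0) ha
  -- build the permutation
  have hmem : ∀ i : Fin (d+1), ∃ k : Fin (d+1), γ k = L[(i:ℕ)]'(by omega) := by
    intro i
    have h : L[(i:ℕ)]'(by omega) ∈ s := hLsub _ (List.getElem_mem _)
    rw [hs_def, Finset.mem_image] at h
    obtain ⟨k, -, hk⟩ := h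
    exact ⟨k, hk⟩
  choose f hf using hmem
  have hfinj : Function.Injective f := by
    intro i i' h
    have hL : L[(i:ℕ)]'(by omega) = L[(i':ℕ)]'(by omega) := by
      rw [← hf i, ← hf i', h]
    have : (i : ℕ) = (i' : ℕ) := by
      by_contra hne
      exact (List.Nodup.getElem_inj_iff hLnodup).1 hL |> hne
    exact Fin.ext this
  have hfbij : Function.Bijective f := Finite.injective_iff_bijective.1 hfinj
  refine ⟨Equiv.ofBijective f hfbij, ?_⟩
  set σ := Equiv.ofBijective f hfbij with hσ_def
  have hσ : ∀ k : Fin (d+1), γ (σ k) = L[(k:ℕ)]'(by omega) := hf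
  -- the ℕ-indexed enumeration
  set z : ℕ → F := fun n => if h : n < d + 1 then L[n]'(by omega) else 0 with hz_def
  have hzval : ∀ k : Fin (d+1), z (k : ℕ) = γ (σ k) := by
    intro k
    rw [hσ k, hz_def]
    simp only [k.isLt, dif_pos]
  have hz : ∀ m m' : ℕ, m ≤ d → m' ≤ d → m ≠ m' → z m ≠ z m' := by
    intro m m' hm hm' hne
    simp only [hz_def, dif_pos (by omega : m < d + 1), dif_pos (by omega : m' < d + 1)]
    intro h
    exact hne ((List.Nodup.getElem_inj_iff hLnodup).1 h)
  have hG : ∀ l j : ℕ, l < j → j ≤ d → ν (z l - z j) ≤ ν (z l - z (l + 1)) := by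
    intro l j hlj hjd
    simp only [hz_def, dif_pos (by omega : l < d + 1), dif_pos (by omega : j < d + 1),
      dif_pos (by omega : l + 1 < d + 1)]
    exact hLgreedy l j (by omega) (by omega) hlj
  intro i j hij
  have hijv : (i : ℕ) < (j : ℕ) := hij
  have hjd : (j : ℕ) ≤ d := by omega
  constructor
  · intro l hl1 hl2
    have hl1' : (i : ℕ) ≤ (l : ℕ) := by simpa [Fin.le_def] using hl1
    have hl2' : (l : ℕ) + 1 ≤ (j : ℕ) := by simpa [Fin.le_def] using hl2
    have key := mfe_greedy_all hmul hadd hz hG (l : ℕ) (i : ℕ) (j : ℕ)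
      hijv hjd hl1' (by omega)
    rw [← hzval i, ← hzval j, ← hzval l.castSucc, ← hzval l.succ]
    simpa [Fin.coe_castSucc, Fin.val_succ] using key
  · obtain ⟨l, hl1, hl2, hl3⟩ := mfe_telescope hadd hz (j : ℕ) (i : ℕ) hijv hjd
    have hld : l < d := by omega
    refine ⟨⟨l, hld⟩, by simpa [Fin.le_def] using hl1, by simpa [Fin.le_def] using hl2, ?_⟩
    have key := mfe_greedy_all hmul hadd hz hG l (i : ℕ) (j : ℕ) hijv hjd hl1 (by omega)
    have heq : ν (z (i : ℕ) - z (j : ℕ)) = ν (z l - z (l + 1)) := le_antisymm key hl3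
    rw [← hzval i, ← hzval j, ← hzval (Fin.castSucc ⟨l, hld⟩), ← hzval (Fin.succ ⟨l, hld⟩)]
    simpa [Fin.coe_castSucc, Fin.val_succ] using heq
end

section
/- Let F be a field with a nonarchimedean valuation ν, let γ₁, …, γ_n ∈ F be pairwise distinct, and m ∈ ℤ. Let Φ = {e_i − e_j : i ≠ j} ⊂ ℚ^n be the root system of type A_{n−1} and Φ_{γ,m} = {e_i − e_j : ν(γ_i − γ_j) ≥ m}. If a root e_p − e_q ∈ Φ is a ℚ-linear combination of elements of Φ_{γ,m}, then e_p − e_q ∈ Φ_{γ,m}. -/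
/-- The level sets of the root valuation function are ℚ-closed sub-root-systems
of the type A root system: if a root `e p - e q` is a ℚ-linear combination of roots
`e i - e j` with `ν (γ i - γ j) ≥ m`, then `ν (γ p - γ q) ≥ m` as well. -/
theorem rootValuation_level_Q_closed {F : Type*} [Field F] (ν : F → ℤ)
    (hmul : ∀ x y : F, x ≠ 0 → y ≠ 0 → ν (x * y) = ν x + ν y)
    (hadd : ∀ x y : F, x ≠ 0 → y ≠ 0 → x + y ≠ 0 → min (ν x) (ν y) ≤ ν (x + y))
    (n : ℕ) (γ : Fin n → F) (hγ : Function.Injective γ) (m : ℤ)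
    (e : Fin n → (Fin n → ℚ)) (he : e = fun i => Pi.single i 1)
    (Φγm : Set (Fin n → ℚ))
    (hΦ : Φγm = {v | ∃ i j : Fin n, i ≠ j ∧ m ≤ ν (γ i - γ j) ∧ v = e i - e j})
    (p q : Fin n) (hpq : p ≠ q)
    (hspan : e p - e q ∈ Submodule.span ℚ Φγm) :
    e p - e q ∈ Φγm := by
  classical
  -- basic valuation facts
  have hν1 : ν 1 = 0 := by
    have := hmul 1 1 one_ne_zero one_ne_zero
    simp only [one_mul] at this
    omega
  have hνneg : ∀ x : F, x ≠ 0 → ν (-x) = ν x := by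
    intro x hx
    have hm1 : ν (-1 : F) = 0 := by
      have := hmul (-1) (-1) (by norm_num) (by norm_num)
      simp only [neg_mul, one_mul, neg_neg] at this
      omega
    have := hmul (-1) x (by norm_num) hx
    rw [neg_one_mul] at this
    omega
  have hsub : ∀ a b : Fin n, a ≠ b → γ a - γ b ≠ 0 := by
    intro a b hab h
    exact hab (hγ (sub_eq_zero.mp h))
  have hsymm : ∀ a b : Fin n, a ≠ b → m ≤ ν (γ a - γ b) → m ≤ ν (γ b - γ a) := by
    intro a b hab h
    have : γ b - γ a = -(γ a - γ b) := by ring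
    rw [this, hνneg _ (hsub a b hab)]
    exact h
  -- the equivalence relation
  set rel : Fin n → Fin n → Prop :=
    fun a b => a = b ∨ (a ≠ b ∧ m ≤ ν (γ a - γ b)) with hrel
  have hrsymm : ∀ a b, rel a b → rel b a := by
    rintro a b (rfl | ⟨hab, h⟩)
    · exact Or.inl rfl
    · exact Or.inr ⟨hab.symm, hsymm a b hab h⟩
  have htrans : ∀ a b c, rel a b → rel b c → rel a c := by
    rintro a b c (rfl | ⟨hab, h1⟩) hbc
    · exact hbc
    rcases hbc with rfl | ⟨hbc, h2⟩
    · exact Or.inr ⟨hab, h1⟩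
    by_cases hac : a = c
    · exact Or.inl hac
    refine Or.inr ⟨hac, ?_⟩
    have key := hadd (γ a - γ b) (γ b - γ c) (hsub a b hab) (hsub b c hbc)
      (by rw [sub_add_sub_cancel]; exact hsub a c hac)
    rw [sub_add_sub_cancel] at key
    exact le_trans (le_min h1 h2) key
  -- the linear functional: sum of coordinates over the class of p
  set T : Finset (Fin n) := Finset.univ.filter (fun i => rel i p) with hT
  set f : (Fin n → ℚ) → ℚ := fun v => ∑ i ∈ T, v i with hf
  have hfsingle : ∀ i : Fin n, f (Pi.single i 1) = if i ∈ T then 1 else 0 := by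
    intro i
    simp only [hf, Pi.single_apply]
    exact Finset.sum_ite_eq' T i (fun _ => 1)
  have hfgen : ∀ v ∈ Φγm, f v = 0 := by
    intro v hv
    rw [hΦ] at hv
    obtain ⟨i, j, hij, hm, rfl⟩ := hv
    have hmem : i ∈ T ↔ j ∈ T := by
      simp only [hT, Finset.mem_filter, Finset.mem_univ, true_and]
      constructor
      · intro h; exact htrans j i p (hrsymm i j (Or.inr ⟨hij, hm⟩)) h
      · intro h; exact htrans i j p (Or.inr ⟨hij, hm⟩) h
    have : f (e i - e j) = f (e i) - f (e j) := by
      simp [hf, Finset.sum_sub_distrib]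
    rw [this, he]
    simp only [hfsingle]
    by_cases h : i ∈ T
    · rw [if_pos h, if_pos (hmem.mp h)]; ring
    · rw [if_neg h, if_neg (fun hj => h (hmem.mpr hj))]; ring
  have hfspan : ∀ v ∈ Submodule.span ℚ Φγm, f v = 0 := by
    intro v hv
    induction hv using Submodule.span_induction with
    | mem x hx => exact hfgen x hx
    | zero => simp [hf]
    | add x y _ _ hx hy =>
        have : f (x + y) = f x + f y := by
          simp [hf, Finset.sum_add_distrib]
        rw [this, hx, hy, add_zero]
    | smul c x _ hx =>
        have : f (c • x) = c * f x := by
          simp [hf, Finset.mul_sum]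
        rw [this, hx, mul_zero]
  have hfpq := hfspan _ hspan
  have hfe : f (e p - e q) = f (e p) - f (e q) := by
    simp [hf, Finset.sum_sub_distrib]
  rw [hfe, he] at hfpq
  simp only [hfsingle] at hfpq
  have hpT : p ∈ T := by
    simp [hT, hrel]
  rw [if_pos hpT] at hfpq
  have hqT : q ∈ T := by
    by_contra h
    rw [if_neg h] at hfpq
    norm_num at hfpq
  have hqp : rel q p := by
    simpa [hT] using hqT
  rcases hqp with h | ⟨hqp, h⟩
  · exact absurd h.symm hpq
  · rw [hΦ]
    exact ⟨p, q, hpq, hsymm q p hqp h, rfl⟩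
end

section
/- Let f : ℤ_{≥0}^d → ℂ be a function and c ∈ ℂ such that f(n₁+1, …, n_d+1) = c·f(n₁, …, n_d) for all (n₁,…,n_d) ∈ ℤ_{≥0}^d. Let B = {n ∈ ℤ_{≥0}^d : min_i n_i = 0}. If the power series Σ_{n∈B} f(n) t₁^{n₁}⋯t_d^{n_d} is the expansion of a rational function, then the full generating series Σ_{n∈ℤ_{≥0}^d} f(n) t₁^{n₁}⋯t_d^{n_d} is also the expansion of a rational function. -/
/-!
Write `𝟙` for the all-ones exponent. Homogeneity says that the coefficient of `t^(e + 𝟙)` in the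
generating series `G` is `c` times that of `t^e`, so in `(1 - c t^𝟙) G` every coefficient `e ≥ 𝟙`
cancels and what remains is exactly the boundary series `S`. Hence `Q (1 - c t^𝟙) G = P` whenever
`Q S = P`, and `1 - c t^𝟙` has constant term `1` as soon as `d > 0`; for `d = 0` every series is
a constant.
-/

open MvPowerSeries Classical

/-- A multivariate formal power series is the expansion of a rational function. -/
def IsRationalPS {d : ℕ} (F : MvPowerSeries (Fin d) ℂ) : Prop :=
  ∃ P Q : MvPolynomial (Fin d) ℂ, MvPolynomial.coeff 0 Q ≠ 0 ∧
    (Q : MvPowerSeries (Fin d) ℂ) * F = (P : MvPowerSeries (Fin d) ℂ)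

noncomputable def allOnes (σ : Type*) [Finite σ] : σ →₀ ℕ := Finsupp.equivFunOnFinite.symm 1

section AllOnes

variable {σ : Type*} [Finite σ]

@[simp]
theorem allOnes_apply (i : σ) : allOnes σ i = 1 := rfl

theorem allOnes_le_iff {e : σ →₀ ℕ} : allOnes σ ≤ e ↔ ¬∃ i, e i = 0 := by
  simp only [Finsupp.le_def, allOnes_apply, not_exists, Nat.one_le_iff_ne_zero]

theorem allOnes_ne_zero [Nonempty σ] : allOnes σ ≠ 0 := fun h => by
  simpa using DFunLike.congr_fun h (Classical.arbitrary σ)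

end AllOnes

theorem coeff_one_sub_monomial_allOnes_mul {σ R : Type*} [Finite σ] [CommRing R] (c : R)
    {G : MvPowerSeries σ R} (hG : ∀ e, coeff (e + allOnes σ) G = c * coeff e G)
    (e : σ →₀ ℕ) :
    coeff e ((1 - monomial (allOnes σ) c) * G) = if ∃ i, e i = 0 then coeff e G else 0 := by
  rw [sub_mul, one_mul, map_sub, coeff_monomial_mul]
  by_cases he : allOnes σ ≤ e
  · rw [if_pos he, if_neg (allOnes_le_iff.mp he), ← hG, tsub_add_cancel_of_le he, sub_self]
  · rw [if_neg he, if_pos (not_not.mp (allOnes_le_iff.not.mp he)), sub_zero]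

theorem coeff_zero_one_sub_monomial {σ R : Type*} [CommRing R] {n : σ →₀ ℕ} (hn : n ≠ 0)
    (c : R) : MvPolynomial.coeff 0 (1 - MvPolynomial.monomial n c) = 1 := by
  rw [MvPolynomial.coeff_sub, MvPolynomial.coeff_one, MvPolynomial.coeff_monomial, if_neg hn,
    if_pos rfl, sub_zero]

theorem IsRationalPS.of_mul_eq {d : ℕ} {F G : MvPowerSeries (Fin d) ℂ} (hF : IsRationalPS F)
    {A : MvPolynomial (Fin d) ℂ} (hA : MvPolynomial.coeff 0 A ≠ 0)
    (hAG : (A : MvPowerSeries (Fin d) ℂ) * G = F) : IsRationalPS G := by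
  obtain ⟨P, Q, hQ, hQF⟩ := hF
  refine ⟨P, Q * A, ?_, ?_⟩
  · rw [← MvPolynomial.constantCoeff_eq, map_mul]
    exact mul_ne_zero hQ hA
  · rw [MvPolynomial.coe_mul, mul_assoc, hAG, hQF]

theorem isRationalPS_of_fin_zero (F : MvPowerSeries (Fin 0) ℂ) : IsRationalPS F := by
  refine ⟨MvPolynomial.C (coeff 0 F), 1, by simp, ?_⟩
  ext e
  rw [Subsingleton.elim e 0, MvPolynomial.coe_one, one_mul, MvPolynomial.coeff_coe,
    MvPolynomial.coeff_C, if_pos rfl]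

/-- if `f (n + 1) = c · f n` (shift by the all-ones vector) and the generating
series over the boundary `B = {n : min_i n_i = 0}` is rational, then the full generating
series of `f` is rational. -/
theorem rational_of_homogeneity {d : ℕ} (f : (Fin d → ℕ) → ℂ) (c : ℂ)
    (hhom : ∀ n : Fin d → ℕ, f (fun i => n i + 1) = c * f n)
    (G S : MvPowerSeries (Fin d) ℂ)
    (hG : ∀ e : Fin d →₀ ℕ, MvPowerSeries.coeff e G = f e)
    (hS : ∀ e : Fin d →₀ ℕ,
      MvPowerSeries.coeff e S = if ∃ i, e i = 0 then f e else 0)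
    (hSrat : IsRationalPS S) :
    IsRationalPS G := by
  obtain rfl | hd := Nat.eq_zero_or_pos d
  · exact isRationalPS_of_fin_zero G
  have : Nonempty (Fin d) := ⟨⟨0, hd⟩⟩
  have hshift : ∀ e, coeff (e + allOnes (Fin d)) G = c * coeff e G := fun e => by
    rw [hG, hG, ← hhom]
    rfl
  refine hSrat.of_mul_eq (A := 1 - MvPolynomial.monomial (allOnes (Fin d)) c) ?_ ?_
  · rw [coeff_zero_one_sub_monomial allOnes_ne_zero]
    exact one_ne_zero
  ext e
  rw [← MvPolynomial.coeToMvPowerSeries.ringHom_apply, map_sub, map_one,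
    MvPolynomial.coeToMvPowerSeries.ringHom_apply, MvPolynomial.coe_monomial,
    coeff_one_sub_monomial_allOnes_mul c hshift, hS, hG]
  congr -- the two sides decide `∃ i, e i = 0` by different instances
end
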